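/- arXiv:2401.07299 — 7 statements merged into one kernel-verified Lean document; each statement's English description precedes it below -/
import Mathlib

section
/- Let D₁, D₂ : (0,∞) → ℝ be nonnegative, nonincreasing, right-continuous functions with Dᵢ(s) → 0 as s → ∞, and let λ₁, λ₂ be their generalized inverses, λᵢ(t) = inf{ s > 0 : Dᵢ(s) ≤ t }. Then the Lebesgue integrals over (0,∞) satisfy ∫₀^∞ |λ₁(t) − λ₂(t)| dt = ∫₀^∞ |D₁(t) − D₂(t)| dt (as an equality in [0,∞]). -/
open MeasureTheory Filter Set
open scoped ENNReal symmDiff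

/-!
Both integrals compute the measure, for Lebesgue measure on `(0,∞)²`, of the region
`{(t, s) | t < D₁ s} ∆ {(t, s) | t < D₂ s}` between the two subgraphs. Its slice at a fixed
`s` is the interval between `D₁ s` and `D₂ s`; its slice at a fixed `t` is, up to an endpoint,
the interval between `λ₁ t` and `λ₂ t`, because `t < D s ↔ s < λ t` for `s ≠ λ t`.
Tonelli's theorem exchanges the two iterated integrals.
-/

theorem lintegral_measure_slice_comm {α β : Type*} [MeasurableSpace α] [MeasurableSpace β]
    {μ : Measure α} {ν : Measure β} [SFinite μ] [SFinite ν] {E : Set (α × β)}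
    (hE : NullMeasurableSet E (μ.prod ν)) (hx : ∀ x, NullMeasurableSet (Prod.mk x ⁻¹' E) ν)
    (hy : ∀ y, NullMeasurableSet ((·, y) ⁻¹' E) μ) :
    ∫⁻ x, ν (Prod.mk x ⁻¹' E) ∂μ = ∫⁻ y, μ ((·, y) ⁻¹' E) ∂ν := by
  simp_rw [← lintegral_indicator_one₀ (hx _), ← lintegral_indicator_one₀ (hy _)]
  exact lintegral_lintegral_swap ((aemeasurable_indicator_const_iff 1).2 hE)

theorem volume_Iio_symmDiff_Iio (a b : ℝ) : volume (Iio a ∆ Iio b) = ENNReal.ofReal |a - b| := by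
  wlog hab : a ≤ b generalizing a b
  · rw [symmDiff_comm, abs_sub_comm]
    exact this b a (le_of_not_ge hab)
  have hdiff : Iio b \ Iio a = Ico a b := by ext; simp
  rw [symmDiff_of_le (Iio_subset_Iio hab), hdiff, Real.volume_Ico, abs_sub_comm,
    abs_of_nonneg (sub_nonneg.2 hab)]

theorem restrict_Ioi_Iio_symmDiff_Iio {a b c : ℝ} (ha : c ≤ a) (hb : c ≤ b) :
    volume.restrict (Ioi c) (Iio a ∆ Iio b) = ENNReal.ofReal |a - b| := by
  have hsub : Iio a ∆ Iio b ⊆ Ici c := by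
    intro x hx
    rcases hx with ⟨-, hx⟩ | ⟨-, hx⟩ <;> simp only [mem_Iio, not_lt] at hx <;>
      exact mem_Ici.2 (by linarith)
  rw [Measure.restrict_congr_set Ioi_ae_eq_Ici, Measure.restrict_apply' measurableSet_Ici,
    inter_eq_left.2 hsub, volume_Iio_symmDiff_Iio]

noncomputable def genInv (D : ℝ → ℝ) (t : ℝ) : ℝ := sInf {s | 0 < s ∧ D s ≤ t}

theorem genInv_nonneg (D : ℝ → ℝ) (t : ℝ) : 0 ≤ genInv D t :=
  Real.sInf_nonneg fun _ hs => hs.1.le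

theorem setOf_lt_ae_eq_Iio_genInv {D : ℝ → ℝ} (hD : AntitoneOn D (Ioi 0)) {t : ℝ}
    (hne : {s | 0 < s ∧ D s ≤ t}.Nonempty) :
    {s | t < D s} =ᵐ[volume.restrict (Ioi 0)] Iio (genInv D t) := by
  have hbdd : BddBelow {s | 0 < s ∧ D s ≤ t} := ⟨0, fun _ hs => hs.1.le⟩
  filter_upwards [ae_restrict_mem measurableSet_Ioi, ae_restrict_of_ae (volume.ae_ne (genInv D t))]
    with s (hs : 0 < s) hsL
  change (t < D s) = (s < genInv D t)
  refine propext ⟨fun hts => lt_of_le_of_ne (le_csInf hne fun r hr => ?_) hsL, fun hsL' => ?_⟩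
  · by_contra! hrs
    linarith [hD hr.1 hs hrs.le, hr.2]
  · by_contra! hDs
    exact (csInf_le hbdd ⟨hs, hDs⟩).not_gt hsL'

theorem setOf_le_nonempty_of_tendsto_zero {D : ℝ → ℝ} (hlim : Tendsto D atTop (nhds 0)) {t : ℝ}
    (ht : 0 < t) : {s | 0 < s ∧ D s ≤ t}.Nonempty := by
  obtain ⟨s, hs, hDs⟩ := ((eventually_gt_atTop 0).and (hlim.eventually (ge_mem_nhds ht))).exists
  exact ⟨s, hs, hDs⟩

theorem restrict_Ioi_setOf_lt_symmDiff_setOf_lt {D₁ D₂ : ℝ → ℝ} (hanti₁ : AntitoneOn D₁ (Ioi 0))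
    (hanti₂ : AntitoneOn D₂ (Ioi 0)) (hlim₁ : Tendsto D₁ atTop (nhds 0))
    (hlim₂ : Tendsto D₂ atTop (nhds 0)) {t : ℝ} (ht : 0 < t) :
    volume.restrict (Ioi 0) ({s | t < D₁ s} ∆ {s | t < D₂ s}) =
      ENNReal.ofReal |genInv D₁ t - genInv D₂ t| := by
  have h₁ := setOf_lt_ae_eq_Iio_genInv hanti₁ (setOf_le_nonempty_of_tendsto_zero hlim₁ ht)
  have h₂ := setOf_lt_ae_eq_Iio_genInv hanti₂ (setOf_le_nonempty_of_tendsto_zero hlim₂ ht)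
  rw [measure_congr (h₁.symmDiff h₂),
    restrict_Ioi_Iio_symmDiff_Iio (genInv_nonneg D₁ t) (genInv_nonneg D₂ t)]

theorem stmt3_general (D₁ D₂ : ℝ → ℝ)
    (hpos₁ : ∀ s, 0 < s → 0 ≤ D₁ s) (hpos₂ : ∀ s, 0 < s → 0 ≤ D₂ s)
    (hanti₁ : AntitoneOn D₁ (Set.Ioi 0)) (hanti₂ : AntitoneOn D₂ (Set.Ioi 0))
    (hlim₁ : Tendsto D₁ atTop (nhds 0)) (hlim₂ : Tendsto D₂ atTop (nhds 0))
    (lam₁ lam₂ : ℝ → ℝ)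
    (hlam₁ : ∀ t, 0 < t → lam₁ t = sInf {s : ℝ | 0 < s ∧ D₁ s ≤ t})
    (hlam₂ : ∀ t, 0 < t → lam₂ t = sInf {s : ℝ | 0 < s ∧ D₂ s ≤ t}) :
    ∫⁻ t in Set.Ioi (0:ℝ), ENNReal.ofReal |lam₁ t - lam₂ t| =
      ∫⁻ t in Set.Ioi (0:ℝ), ENNReal.ofReal |D₁ t - D₂ t| := by
  set μ := volume.restrict (Ioi (0 : ℝ))
  have hD₁ : AEMeasurable D₁ μ := aemeasurable_restrict_of_antitoneOn measurableSet_Ioi hanti₁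
  have hD₂ : AEMeasurable D₂ μ := aemeasurable_restrict_of_antitoneOn measurableSet_Ioi hanti₂
  set E : Set (ℝ × ℝ) := {p | p.1 < D₁ p.2} ∆ {p | p.1 < D₂ p.2}
  have hE : NullMeasurableSet E (μ.prod μ) :=
    (nullMeasurableSet_lt measurable_fst.aemeasurable hD₁.comp_snd).symmDiff
      (nullMeasurableSet_lt measurable_fst.aemeasurable hD₂.comp_snd)
  calc ∫⁻ t in Ioi 0, ENNReal.ofReal |lam₁ t - lam₂ t|
      = ∫⁻ t, μ (Prod.mk t ⁻¹' E) ∂μ := setLIntegral_congr_fun measurableSet_Ioi fun t ht => by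
        rw [hlam₁ t ht, hlam₂ t ht]
        exact (restrict_Ioi_setOf_lt_symmDiff_setOf_lt hanti₁ hanti₂ hlim₁ hlim₂ ht).symm
    _ = ∫⁻ s, μ ((·, s) ⁻¹' E) ∂μ := lintegral_measure_slice_comm hE
        (fun t => (nullMeasurableSet_lt aemeasurable_const hD₁).symmDiff
          (nullMeasurableSet_lt aemeasurable_const hD₂))
        (fun s => show NullMeasurableSet (Iio (D₁ s) ∆ Iio (D₂ s)) μ from
          (measurableSet_Iio.symmDiff measurableSet_Iio).nullMeasurableSet)
    _ = ∫⁻ s in Ioi 0, ENNReal.ofReal |D₁ s - D₂ s| :=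
        setLIntegral_congr_fun measurableSet_Ioi fun s hs =>
          restrict_Ioi_Iio_symmDiff_Iio (hpos₁ s hs) (hpos₂ s hs)

/-- For two nonnegative, nonincreasing, right-continuous functions `D₁, D₂` on `(0,∞)`
vanishing at infinity, with generalized inverses `lam₁, lam₂`, the `L¹`-distances agree:
`∫₀^∞ |lam₁ - lam₂| = ∫₀^∞ |D₁ - D₂|` (as an equality in `[0,∞]`). -/
theorem stmt3 (D₁ D₂ : ℝ → ℝ)
    (hpos₁ : ∀ s, 0 < s → 0 ≤ D₁ s) (hpos₂ : ∀ s, 0 < s → 0 ≤ D₂ s)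
    (hanti₁ : AntitoneOn D₁ (Set.Ioi 0)) (hanti₂ : AntitoneOn D₂ (Set.Ioi 0))
    (hrc₁ : ∀ s, 0 < s → Tendsto D₁ (nhdsWithin s (Set.Ioi s)) (nhds (D₁ s)))
    (hrc₂ : ∀ s, 0 < s → Tendsto D₂ (nhdsWithin s (Set.Ioi s)) (nhds (D₂ s)))
    (hlim₁ : Tendsto D₁ atTop (nhds 0)) (hlim₂ : Tendsto D₂ atTop (nhds 0))
    (lam₁ lam₂ : ℝ → ℝ)
    (hlam₁ : ∀ t, 0 < t → lam₁ t = sInf {s : ℝ | 0 < s ∧ D₁ s ≤ t})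
    (hlam₂ : ∀ t, 0 < t → lam₂ t = sInf {s : ℝ | 0 < s ∧ D₂ s ≤ t}) :
    ∫⁻ t in Set.Ioi (0:ℝ), ENNReal.ofReal |lam₁ t - lam₂ t| =
      ∫⁻ t in Set.Ioi (0:ℝ), ENNReal.ofReal |D₁ t - D₂ t| :=
  stmt3_general D₁ D₂ hpos₁ hpos₂ hanti₁ hanti₂ hlim₁ hlim₂ lam₁ lam₂ hlam₁ hlam₂
end

section
/- Let g : ℝ → ℝ be a measurable function with g ≥ 0 almost everywhere on (0,∞) and ∫₀^∞ g(t) dt = 1. Then the integrals ∫₀^∞ |n·g(n t) − g(t)| dt converge to 2 as the positive integer n tends to infinity. -/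
/-!
Write `fₙ(t) = n g(nt)`. Pointwise `|fₙ - g| + 2 min(fₙ, g) = fₙ + g`, and both densities have
mass one, so the `L¹` distance equals `2 - 2 ∫ min(fₙ, g)`. For any cut-off `δ > 0` the overlap
`∫ min(fₙ, g)` is at most the `g`-mass of `(0, δ]` plus the `fₙ`-mass of `(δ, ∞)`, and the
substitution `s = nt` turns the latter into the `g`-mass of `(nδ, ∞)`. With `δ = n^{-1/2}` both
masses tend to zero.
-/

open MeasureTheory Filter Set
open scoped ENNReal Topology

section FiniteMeasureOnReal

variable (ν : Measure ℝ) [IsFiniteMeasure ν]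

lemma tendsto_measure_Ioi_atTop : Tendsto (fun c => ν (Ioi c)) atTop (𝓝 0) := by
  have hempty : ⋂ c : ℝ, Ioi c = ∅ :=
    eq_empty_of_forall_notMem fun x hx => lt_irrefl x (mem_iInter.1 hx x)
  have := tendsto_measure_iInter_atTop (μ := ν)
    (fun _ => measurableSet_Ioi.nullMeasurableSet) (fun _ _ hcd => Ioi_subset_Ioi hcd)
    ⟨0, measure_ne_top ν _⟩
  rwa [hempty, measure_empty] at this

lemma tendsto_measure_Ioc_nhdsGT (a : ℝ) : Tendsto (fun δ => ν (Ioc a δ)) (𝓝[>] a) (𝓝 0) := by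
  have hempty : ⋂ δ > a, Ioc a δ = ∅ := by
    refine eq_empty_of_forall_notMem fun x hx => ?_
    have hax : a < x := (mem_iInter₂.1 hx (a + 1) (by linarith)).1
    have := (mem_iInter₂.1 hx ((a + x) / 2) (by linarith)).2
    linarith
  have := tendsto_measure_biInter_gt (μ := ν) (s := Ioc a) (a := a)
    (fun _ _ => measurableSet_Ioc.nullMeasurableSet)
    (fun _ _ _ hij => Ioc_subset_Ioc_right hij) ⟨a + 1, by linarith, measure_ne_top ν _⟩
  rwa [hempty, measure_empty] at this

end FiniteMeasureOnReal

lemma setLIntegral_Ioi_ofReal_mul_comp_mul_left (g : ℝ → ℝ) {a : ℝ} (ha : 0 < a) (b : ℝ) :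
    ∫⁻ t in Ioi b, ENNReal.ofReal (a * g (a * t)) = ∫⁻ s in Ioi (a * b), ENNReal.ofReal (g s) := by
  rw [← image_mul_left_Ioi ha, lintegral_image_eq_lintegral_abs_deriv_mul measurableSet_Ioi
    (fun t _ => (hasDerivAt_id' t |>.const_mul a).hasDerivWithinAt)
    (mul_right_injective₀ ha.ne').injOn]
  simp [abs_of_pos ha, ENNReal.ofReal_mul ha.le]

lemma ae_restrict_Ioi_zero_comp_mul_left {p : ℝ → Prop} {a : ℝ} (ha : 0 < a)
    (hp : ∀ᵐ t ∂volume.restrict (Ioi 0), p t) : ∀ᵐ t ∂volume.restrict (Ioi 0), p (a * t) := by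
  rw [ae_restrict_iff' measurableSet_Ioi] at hp ⊢
  filter_upwards [(Measure.quasiMeasurePreserving_smul volume ha.ne').ae hp] with t ht ht0
  exact ht (mul_pos ha ht0)

lemma ofReal_abs_sub_add_two_mul_min {a b : ℝ} (ha : 0 ≤ a) (hb : 0 ≤ b) :
    ENNReal.ofReal |a - b| + 2 * min (ENNReal.ofReal a) (ENNReal.ofReal b)
      = ENNReal.ofReal a + ENNReal.ofReal b := by
  have hmin : 0 ≤ min a b := le_min ha hb
  rw [← ENNReal.ofReal_min, ← ENNReal.ofReal_ofNat 2, ← ENNReal.ofReal_mul zero_le_two,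
    ← ENNReal.ofReal_add (abs_nonneg _) (mul_nonneg zero_le_two hmin), ← ENNReal.ofReal_add ha hb]
  congr 1
  rcases le_total a b with hab | hab
  · rw [abs_of_nonpos (sub_nonpos.2 hab), min_eq_left hab]; ring
  · rw [abs_of_nonneg (sub_nonneg.2 hab), min_eq_right hab]; ring

lemma lintegral_ofReal_abs_sub_add_two_mul_lintegral_min {α : Type*} [MeasurableSpace α]
    {μ : Measure α} {u v : α → ℝ} (hu : AEMeasurable u μ) (hv : AEMeasurable v μ)
    (hu0 : 0 ≤ᵐ[μ] u) (hv0 : 0 ≤ᵐ[μ] v) :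
    ∫⁻ x, ENNReal.ofReal |u x - v x| ∂μ
        + 2 * ∫⁻ x, min (ENNReal.ofReal (u x)) (ENNReal.ofReal (v x)) ∂μ
      = ∫⁻ x, ENNReal.ofReal (u x) ∂μ + ∫⁻ x, ENNReal.ofReal (v x) ∂μ := by
  rw [← lintegral_const_mul' _ _ ENNReal.ofNat_ne_top,
    ← lintegral_add_right' _ ((hu.ennreal_ofReal.min hv.ennreal_ofReal).const_mul 2),
    ← lintegral_add_left' hu.ennreal_ofReal]
  refine lintegral_congr_ae ?_
  filter_upwards [hu0, hv0] with x hux hvx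
  exact ofReal_abs_sub_add_two_mul_min hux hvx

lemma setLIntegral_min_dilation_le (g : ℝ → ℝ) {a δ : ℝ} (ha : 0 < a) (hδ : 0 < δ) :
    ∫⁻ t in Ioi 0, min (ENNReal.ofReal (a * g (a * t))) (ENNReal.ofReal (g t))
      ≤ (∫⁻ t in Ioc 0 δ, ENNReal.ofReal (g t)) + ∫⁻ s in Ioi (a * δ), ENNReal.ofReal (g s) := by
  rw [← Ioc_union_Ioi_eq_Ioi hδ.le, ← setLIntegral_Ioi_ofReal_mul_comp_mul_left g ha δ]
  exact (lintegral_union_le _ _ _).trans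
    (add_le_add (lintegral_mono fun t => min_le_right _ _) (lintegral_mono fun t => min_le_left _ _))

lemma tendsto_setLIntegral_min_dilation_atTop (g : ℝ → ℝ)
    (hg : ∫⁻ t in Ioi 0, ENNReal.ofReal (g t) ≠ ∞) :
    Tendsto (fun a : ℝ => ∫⁻ t in Ioi 0, min (ENNReal.ofReal (a * g (a * t))) (ENNReal.ofReal (g t)))
      atTop (𝓝 0) := by
  set ν := (volume.restrict (Ioi (0 : ℝ))).withDensity fun t => ENNReal.ofReal (g t)
  have : IsFiniteMeasure ν := isFiniteMeasure_withDensity hg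
  have hν : ∀ s ⊆ Ioi (0 : ℝ), MeasurableSet s → ν s = ∫⁻ t in s, ENNReal.ofReal (g t) :=
    fun s hs hsm => by
      rw [withDensity_apply _ hsm, Measure.restrict_restrict hsm, inter_eq_left.2 hs]
  have hbound : ∀ᶠ a : ℝ in atTop,
      ∫⁻ t in Ioi 0, min (ENNReal.ofReal (a * g (a * t))) (ENNReal.ofReal (g t))
        ≤ ν (Ioc 0 (√a)⁻¹) + ν (Ioi √a) := by
    filter_upwards [eventually_gt_atTop 0] with a ha
    have hsqrt : 0 < √a := Real.sqrt_pos.2 ha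
    have hcut : a * (√a)⁻¹ = √a := by
      field_simp; exact (Real.sq_sqrt ha.le).symm
    rw [hν _ (fun t ht => ht.1) measurableSet_Ioc, hν _ (Ioi_subset_Ioi hsqrt.le) measurableSet_Ioi]
    simpa only [hcut] using setLIntegral_min_dilation_le g ha (inv_pos.2 hsqrt)
  have hhead := (tendsto_measure_Ioc_nhdsGT ν 0).comp
    (tendsto_inv_atTop_nhdsGT_zero.comp Real.tendsto_sqrt_atTop)
  have htail := (tendsto_measure_Ioi_atTop ν).comp Real.tendsto_sqrt_atTop
  have hlim : Tendsto (fun a : ℝ => ν (Ioc 0 (√a)⁻¹) + ν (Ioi √a)) atTop (𝓝 0) := by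
    simpa using hhead.add htail
  exact tendsto_of_tendsto_of_tendsto_of_le_of_le' tendsto_const_nhds hlim
    (Eventually.of_forall fun _ => zero_le) hbound

/-- A probability density on `(0,∞)` and its large dilations become asymptotically
mutually singular in `L¹`: `∫₀^∞ |n·g(nt) − g(t)| dt → 2` as `n → ∞`. -/
theorem stmt5 (g : ℝ → ℝ) (hmeas : Measurable g)
    (hpos : ∀ᵐ t ∂(volume.restrict (Set.Ioi (0:ℝ))), 0 ≤ g t)
    (hint : ∫⁻ t in Set.Ioi (0:ℝ), ENNReal.ofReal (g t) = 1) :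
    Tendsto
      (fun n : ℕ => ∫⁻ t in Set.Ioi (0:ℝ), ENNReal.ofReal |(n : ℝ) * g ((n : ℝ) * t) - g t|)
      atTop (nhds 2) := by
  set M : ℕ → ℝ≥0∞ := fun n =>
    ∫⁻ t in Ioi 0, min (ENNReal.ofReal (n * g (n * t))) (ENNReal.ofReal (g t))
  have hM : Tendsto (fun n => 2 * M n) atTop (𝓝 0) := by
    rw [← mul_zero (2 : ℝ≥0∞)]
    exact ENNReal.Tendsto.const_mul ((tendsto_setLIntegral_min_dilation_atTop g
      (hint ▸ ENNReal.one_ne_top)).comp tendsto_natCast_atTop_atTop) (Or.inr ENNReal.ofNat_ne_top)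
  have hsum : ∀ n : ℕ, 0 < n →
      (∫⁻ t in Ioi 0, ENNReal.ofReal |(n : ℝ) * g (n * t) - g t|) + 2 * M n = 2 := by
    intro n hn
    have hn' : (0 : ℝ) < n := Nat.cast_pos.2 hn
    rw [lintegral_ofReal_abs_sub_add_two_mul_lintegral_min
      (by fun_prop) hmeas.aemeasurable
      ((ae_restrict_Ioi_zero_comp_mul_left hn' hpos).mono fun t ht => mul_nonneg hn'.le ht) hpos,
      setLIntegral_Ioi_ofReal_mul_comp_mul_left g hn', mul_zero, hint, one_add_one_eq_two]
  have hI : ∀ᶠ n : ℕ in atTop,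
      ∫⁻ t in Ioi 0, ENNReal.ofReal |(n : ℝ) * g (n * t) - g t| = 2 - 2 * M n := by
    filter_upwards [eventually_gt_atTop 0] with n hn
    have hM2 : 2 * M n ≤ 2 := (hsum n hn).le.trans' le_add_self
    exact ENNReal.eq_sub_of_add_eq (ne_top_of_le_ne_top ENNReal.ofNat_ne_top hM2) (hsum n hn)
  simpa using (ENNReal.Tendsto.sub tendsto_const_nhds hM (Or.inr ENNReal.zero_ne_top)).congr'
    (hI.mono fun _ h => h.symm)
end

section
/- Let X be a compact Hausdorff space and let F : ℝ × X → X be a continuous flow. Define the period function p : X → [0,∞] by p(x) = inf{ t > 0 : F(t,x) = x }, with the convention inf ∅ = ∞. Then p is lower semicontinuous. -/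
open scoped ENNReal
open Set Filter Topology

/-!
If `x` has no period in `(0, r]`, then by compactness of `[r/2, r]` and closedness of the
fixed-point set `{(t, y) | F (t, y) = y}`, no point near `x` has a period in `[r/2, r]`. Every
period in `(0, r]` has a multiple in `[r/2, r]`, so nearby points have no period in `(0, r]`
either, i.e. their period is at least `r`.
-/

theorem exists_nat_mul_mem_Icc_half {t r : ℝ} (ht : 0 < t) (htr : t ≤ r) :
    ∃ n : ℕ, 0 < n ∧ (n : ℝ) * t ∈ Icc (r / 2) r := by
  have hn : 0 < ⌊r / t⌋₊ := Nat.floor_pos.mpr <| (one_le_div ht).mpr htr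
  have hle : (⌊r / t⌋₊ : ℝ) * t ≤ r := (le_div_iff₀ ht).mp (Nat.floor_le (div_nonneg (ht.le.trans htr) ht.le))
  have hlt : r < (⌊r / t⌋₊ + 1 : ℝ) * t := (div_lt_iff₀ ht).mp (Nat.lt_floor_add_one _)
  have hge : t ≤ (⌊r / t⌋₊ : ℝ) * t := le_mul_of_one_le_left ht.le (by exact_mod_cast hn)
  exact ⟨⌊r / t⌋₊, hn, by linarith, hle⟩

section Flow

variable {X : Type*} {F : ℝ × X → X}

theorem flow_nat_mul_eq_self (hadd : ∀ s t x, F (s + t, x) = F (s, F (t, x))) {x : X} {t : ℝ}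
    (ht : F (t, x) = x) {n : ℕ} (hn : 0 < n) : F (n * t, x) = x := by
  induction n, hn using Nat.le_induction with
  | base => simpa using ht
  | succ n _ ih => rw [Nat.cast_succ, add_one_mul, hadd, ht, ih]

variable [TopologicalSpace X] [T2Space X]

theorem eventually_forall_mem_flow_ne (hF : Continuous F) {K : Set ℝ} (hK : IsCompact K) {x : X}
    (hx : ∀ t ∈ K, F (t, x) ≠ x) : ∀ᶠ y in 𝓝 x, ∀ t ∈ K, F (t, y) ≠ y :=
  hK.eventually_forall_of_forall_eventually fun t ht ↦
    (isOpen_ne_fun (hF.comp continuous_swap) continuous_fst).mem_nhds (hx t ht)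

theorem eventually_forall_Ioc_flow_ne (hF : Continuous F)
    (hadd : ∀ s t x, F (s + t, x) = F (s, F (t, x))) {x : X} {r : ℝ}
    (hx : ∀ t ∈ Ioc 0 r, F (t, x) ≠ x) : ∀ᶠ y in 𝓝 x, ∀ t ∈ Ioc 0 r, F (t, y) ≠ y := by
  rcases le_or_gt r 0 with hr | hr
  · simp [Ioc_eq_empty_of_le hr]
  have hx' : ∀ t ∈ Icc (r / 2) r, F (t, x) ≠ x := fun t ht ↦ hx t ⟨by linarith [ht.1], ht.2⟩
  filter_upwards [eventually_forall_mem_flow_ne hF isCompact_Icc hx'] with y hy t ⟨ht, htr⟩ hFt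
  obtain ⟨n, hn, hnt⟩ := exists_nat_mul_mem_Icc_half ht htr
  exact hy _ hnt (flow_nat_mul_eq_self hadd hFt hn)

end Flow

theorem stmt6_general {X : Type*} [TopologicalSpace X] [T2Space X]
    (F : ℝ × X → X) (hF : Continuous F)
    (hadd : ∀ s t x, F (s + t, x) = F (s, F (t, x)))
    (p : X → ℝ≥0∞)
    (hp : ∀ x, p x = sInf (ENNReal.ofReal '' {t : ℝ | 0 < t ∧ F (t, x) = x})) :
    LowerSemicontinuous p := by
  intro x c hc
  obtain ⟨d, hcd, hdp⟩ := exists_between hc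
  have hx : ∀ t ∈ Ioc 0 d.toReal, F (t, x) ≠ x := by
    rintro t ⟨ht, htd⟩ hFt
    have : p x ≤ d := calc
      p x ≤ ENNReal.ofReal t := hp x ▸ sInf_le ⟨t, ⟨ht, hFt⟩, rfl⟩
      _ ≤ d := ENNReal.ofReal_le_of_le_toReal htd
    exact this.not_gt hdp
  filter_upwards [eventually_forall_Ioc_flow_ne hF hadd hx] with y hy
  refine hcd.trans_le <| (hp y).symm ▸ le_sInf ?_
  rintro _ ⟨t, ⟨ht, hFt⟩, rfl⟩
  have htd : d.toReal < t := not_le.mp fun htd ↦ hy t ⟨ht, htd⟩ hFt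
  exact (ENNReal.le_ofReal_iff_toReal_le hdp.ne_top ht.le).mpr htd.le

/-- The period function of a continuous flow on a compact Hausdorff space is lower
semicontinuous. -/
theorem stmt6 {X : Type*} [TopologicalSpace X] [CompactSpace X] [T2Space X]
    (F : ℝ × X → X) (hF : Continuous F)
    (h0 : ∀ x, F (0, x) = x)
    (hadd : ∀ s t x, F (s + t, x) = F (s, F (t, x)))
    (p : X → ℝ≥0∞)
    (hp : ∀ x, p x = sInf (ENNReal.ofReal '' {t : ℝ | 0 < t ∧ F (t, x) = x})) :
    LowerSemicontinuous p :=
  stmt6_general F hF hadd p hp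
end

section
/- Let X be a compact Hausdorff space and let F : ℝ × X → X satisfy F(0,x) = x and F(s+t,x) = F(s,F(t,x)) for all s,t ∈ ℝ and x ∈ X, with each map F(t,·) : X → X continuous. Assume moreover that for every continuous function f : X → ℂ the map t ↦ f∘F(t,·) is continuous from ℝ into the space C(X) of continuous functions on X equipped with the supremum norm. Then F is jointly continuous, i.e. if a net (tᵢ, xᵢ) converges to (t, x) in ℝ × X then F(tᵢ, xᵢ) converges to F(t,x). -/
/-!
Evaluation at points embeds a compact Hausdorff space `X` into the product `C(X, ℂ) → ℂ`
(a continuous injection from a compact space into a Hausdorff one), so a map into `X` is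
continuous as soon as its composite with every `f : C(X, ℂ)` is. For the flow,
`f ∘ F` is the evaluation map `C(X, ℂ) × X → ℂ` (continuous since `X` is locally compact)
composed with the continuous map `(t, x) ↦ (f ∘ F(t, ·), x)`.
-/

open Topology

namespace ContinuousMap

variable {X : Type*} [TopologicalSpace X]

theorem injective_pointEval_complex [T35Space X] :
    Function.Injective fun (x : X) (f : C(X, ℂ)) => f x := by
  intro x y hxy
  by_contra hne
  obtain ⟨f, hf, hfxy⟩ := separatesPoints_continuous_of_t35Space hne
  exact hfxy <| Complex.ofReal_injective <|
    congrFun hxy ((⟨Complex.ofReal, Complex.continuous_ofReal⟩ : C(ℝ, ℂ)).comp ⟨f, hf⟩)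

theorem isClosedEmbedding_pointEval_complex [CompactSpace X] [T2Space X] :
    IsClosedEmbedding fun (x : X) (f : C(X, ℂ)) => f x :=
  (continuous_pi fun f => f.continuous).isClosedEmbedding injective_pointEval_complex

theorem continuous_of_forall_continuous_comp [CompactSpace X] [T2Space X]
    {Y : Type*} [TopologicalSpace Y] {g : Y → X} (hg : ∀ f : C(X, ℂ), Continuous (f ∘ g)) :
    Continuous g :=
  isClosedEmbedding_pointEval_complex.continuous_iff.mpr (continuous_pi hg)

theorem continuous_uncurry_of_continuous_comp [CompactSpace X] [T2Space X]
    {T : Type*} [TopologicalSpace T] (Φ : T → C(X, X))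
    (hΦ : ∀ f : C(X, ℂ), Continuous fun t => f.comp (Φ t)) :
    Continuous fun p : T × X => Φ p.1 p.2 :=
  continuous_of_forall_continuous_comp fun f =>
    continuous_eval.comp ((hΦ f).comp continuous_fst |>.prodMk continuous_snd)

end ContinuousMap

theorem stmt8_general {X : Type*} [TopologicalSpace X] [CompactSpace X] [T2Space X]
    (F : ℝ × X → X)
    (hFt : ∀ t : ℝ, Continuous fun x => F (t, x))
    (hstrong : ∀ f : C(X, ℂ),
      Continuous fun t : ℝ => f.comp ⟨fun x => F (t, x), hFt t⟩) :
    Continuous F :=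
  ContinuousMap.continuous_uncurry_of_continuous_comp (fun t => ⟨fun x => F (t, x), hFt t⟩)
    hstrong

/-- A flow on a compact Hausdorff space all of whose time-`t` maps are continuous and whose
induced one-parameter group on `C(X)` is norm-continuous is jointly continuous. -/
theorem stmt8 {X : Type*} [TopologicalSpace X] [CompactSpace X] [T2Space X]
    (F : ℝ × X → X)
    (h0 : ∀ x, F (0, x) = x)
    (hadd : ∀ s t x, F (s + t, x) = F (s, F (t, x)))
    (hFt : ∀ t : ℝ, Continuous fun x => F (t, x))
    (hstrong : ∀ f : C(X, ℂ),
      Continuous fun t : ℝ => f.comp ⟨fun x => F (t, x), hFt t⟩) :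
    Continuous F :=
  stmt8_general F hFt hstrong
end

section
/- Let X be a compact Hausdorff space, let F : ℝ × X → X be a continuous flow, and let x ∈ X be an aperiodic point, i.e. F(t,x) ≠ x for all t ≠ 0. Then there exists a Borel probability measure χ on X such that: (i) for every s ≥ 0 the pushforward of χ under F(s,·) dominates e^{−s}·χ, i.e. (F(s,·))_*χ ≥ e^{−s}·χ as measures; and (ii) for every s > 0 the total variation distance satisfies ‖χ − (F(s,·))_*χ‖ = 2 − 2e^{−s}; in particular ‖χ − (F(s,·))_*χ‖ → 2 as s → ∞. -/
open MeasureTheory Filter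
open scoped ENNReal

/-- Total variation distance of two (finite) measures: `|μ − ν|(X)`, rendered via the
Jordan decomposition as `(μ − ν)(X) + (ν − μ)(X)` with truncated subtraction of measures. -/
noncomputable def tvDist {X : Type*} [MeasurableSpace X] (μ ν : Measure X) : ℝ≥0∞ :=
  (μ - ν) Set.univ + (ν - μ) Set.univ

/-!
The witness is the pushforward `χ` of the probability density `e^t dt` on `(-∞, 0]` along the
orbit map `t ↦ F (t, x)`. The flow acts on the orbit by translation, and translating the density
by `s ≥ 0` gives `e^{-s}` times itself plus the density `e^{t-s} dt` on `(0, s]`. Aperiodicity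
makes the orbit map a continuous injection of `ℝ`, hence a measurable embedding (Lusin–Souslin),
so the two pieces of `(F_s)_*χ` stay mutually singular; by uniqueness of the Jordan
decomposition, `χ - (F_s)_*χ = (1 - e^{-s}) χ` and `(F_s)_*χ - χ` has mass `1 - e^{-s}`.
-/

open Set Real

namespace MeasureTheory.Measure

variable {X : Type*} [MeasurableSpace X]

/-- Uniqueness of the Jordan decomposition of `μ - ν`. -/
theorem sub_eq_and_sub_eq_of_add_eq_add {μ ν P N : Measure X} [IsFiniteMeasure μ]
    [IsFiniteMeasure ν] [IsFiniteMeasure P] [IsFiniteMeasure N] (hPN : P ⟂ₘ N)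
    (h : μ + N = ν + P) : μ - ν = P ∧ ν - μ = N := by
  have hj : jordanDecompositionOfToSignedMeasureSub μ ν = ⟨P, N, hPN⟩ := by
    apply JordanDecomposition.toSignedMeasure_injective
    rw [jordanDecompositionOfToSignedMeasureSub_toSignedMeasure]
    change _ = P.toSignedMeasure - N.toSignedMeasure
    rw [sub_eq_sub_iff_add_eq_add, ← toSignedMeasure_add, ← toSignedMeasure_add]
    exact toSignedMeasure_congr (h.trans (add_comm ν P))
  exact ⟨congrArg JordanDecomposition.posPart hj, congrArg JordanDecomposition.negPart hj⟩

end MeasureTheory.Measure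

theorem tvDist_eq_two_mul_of_eq_smul_add {X : Type*} [MeasurableSpace X] {μ ν κ : Measure X}
    [IsProbabilityMeasure μ] [IsProbabilityMeasure ν] {c : ℝ≥0∞} (hν : ν = c • μ + κ)
    (hμκ : μ ⟂ₘ κ) : tvDist μ ν = 2 * (1 - c) := by
  have hmass : c + κ univ = 1 := by
    simpa [measure_univ] using (congrArg (· univ) hν).symm
  have hc : c ≤ 1 := hmass ▸ le_self_add
  have : IsFiniteMeasure κ := isFiniteMeasure_of_le ν (hν ▸ Measure.le_add_left le_rfl)
  have : IsFiniteMeasure ((1 - c) • μ) := μ.smul_finite (by finiteness)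
  have hsum : μ + κ = ν + (1 - c) • μ := by
    rw [hν, add_right_comm, ← add_smul, add_tsub_cancel_of_le hc, one_smul]
  obtain ⟨hsub, hsub'⟩ := Measure.sub_eq_and_sub_eq_of_add_eq_add (hμκ.smul (1 - c)) hsum
  rw [tvDist, hsub, hsub', Measure.smul_apply, measure_univ, smul_eq_mul, mul_one, two_mul,
    ENNReal.eq_sub_of_add_eq (ne_top_of_le_ne_top ENNReal.one_ne_top hc)
      ((add_comm _ _).trans hmass : κ univ + c = 1)]

noncomputable def expMeasureIic : Measure ℝ :=
  (volume.restrict (Iic 0)).withDensity fun t => ENNReal.ofReal (exp t)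

instance : IsProbabilityMeasure expMeasureIic := by
  constructor
  rw [expMeasureIic, withDensity_apply _ MeasurableSet.univ, Measure.restrict_univ,
    ← ofReal_integral_eq_lintegral_ofReal (integrableOn_exp_Iic 0)
      (Filter.Eventually.of_forall fun t => (exp_pos t).le),
    integral_exp_Iic_zero, ENNReal.ofReal_one]

theorem map_add_expMeasureIic (s : ℝ) :
    expMeasureIic.map (s + ·) =
      (volume.restrict (Iic s)).withDensity fun t => ENNReal.ofReal (exp (t - s)) := by
  ext S hS
  have hpre : (s + ·) ⁻¹' (S ∩ Iic s) = (s + ·) ⁻¹' S ∩ Iic 0 := by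
    ext t; simp
  rw [Measure.map_apply (measurable_const_add s) hS, expMeasureIic,
    withDensity_apply _ (hS.preimage (measurable_const_add s)), withDensity_apply _ hS,
    Measure.restrict_restrict (hS.preimage (measurable_const_add s)),
    Measure.restrict_restrict hS, ← hpre,
    ← (measurePreserving_add_left volume s).setLIntegral_comp_preimage_emb
      (measurableEmbedding_addLeft s) (fun t => ENNReal.ofReal (exp (t - s)))]
  simp only [add_sub_cancel_left]

theorem exists_map_add_expMeasureIic_eq_smul_add {s : ℝ} (hs : 0 ≤ s) :
    ∃ κ : Measure ℝ, expMeasureIic.map (s + ·) = ENNReal.ofReal (exp (-s)) • expMeasureIic + κ ∧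
      expMeasureIic ⟂ₘ κ := by
  refine ⟨(volume.restrict (Ioc 0 s)).withDensity fun t => ENNReal.ofReal (exp (t - s)), ?_, ?_⟩
  · rw [map_add_expMeasureIic, ← Iic_union_Ioc_eq_Iic hs,
      Measure.restrict_union (Iic_disjoint_Ioc le_rfl) measurableSet_Ioc, withDensity_add_measure,
      expMeasureIic, ← withDensity_smul _ (by fun_prop)]
    congr 2
    funext t
    rw [Pi.smul_apply, smul_eq_mul, ← ENNReal.ofReal_mul (exp_pos _).le, ← exp_add, neg_add_eq_sub]
  · refine ⟨Ioi 0, measurableSet_Ioi, withDensity_absolutelyContinuous _ _ ?_,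
      withDensity_absolutelyContinuous _ _ ?_⟩
    · rw [Measure.restrict_apply measurableSet_Ioi, Ioi_inter_Iic, Ioc_self, measure_empty]
    · rw [Measure.restrict_apply measurableSet_Ioi.compl, compl_Ioi,
        (Iic_disjoint_Ioc le_rfl).inter_eq, measure_empty]

section Flow

variable {X : Type*} (F : ℝ × X → X)

theorem injective_orbit (h0 : ∀ x, F (0, x) = x) (hadd : ∀ s t x, F (s + t, x) = F (s, F (t, x)))
    {x : X} (hx : ∀ t : ℝ, t ≠ 0 → F (t, x) ≠ x) : Function.Injective fun t => F (t, x) := by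
  intro a b hab
  by_contra hne
  refine hx (a - b) (sub_ne_zero.mpr hne) ?_
  calc F (a - b, x) = F (-b, F (a, x)) := by rw [← hadd, neg_add_eq_sub]
    _ = F (-b, F (b, x)) := congrArg (fun y => F (-b, y)) hab
    _ = x := by rw [← hadd, neg_add_cancel, h0]

variable [TopologicalSpace X] [MeasurableSpace X] [BorelSpace X]

theorem map_flow_map_orbit (hF : Continuous F) (hadd : ∀ s t x, F (s + t, x) = F (s, F (t, x)))
    (μ : Measure ℝ) (x : X) (s : ℝ) :
    (μ.map fun t => F (t, x)).map (fun y => F (s, y)) = (μ.map (s + ·)).map fun t => F (t, x) := by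
  have hφ : Continuous fun t => F (t, x) := by fun_prop
  have hFs : Continuous fun y => F (s, y) := by fun_prop
  rw [Measure.map_map hFs.measurable hφ.measurable,
    Measure.map_map hφ.measurable (measurable_const_add s)]
  congr 1
  funext t
  exact (hadd s t x).symm

end Flow

theorem ENNReal.two_mul_one_sub_ofReal {r : ℝ} (hr : 0 ≤ r) :
    2 * (1 - ENNReal.ofReal r) = ENNReal.ofReal (2 - 2 * r) := by
  rw [← ENNReal.ofReal_one, ← ENNReal.ofReal_sub _ hr, ← ENNReal.ofReal_ofNat 2,
    ← ENNReal.ofReal_mul zero_le_two, mul_sub, mul_one]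

theorem stmt9_general {X : Type*} [TopologicalSpace X] [T2Space X]
    [MeasurableSpace X] [BorelSpace X]
    (F : ℝ × X → X) (hF : Continuous F)
    (h0 : ∀ x, F (0, x) = x)
    (hadd : ∀ s t x, F (s + t, x) = F (s, F (t, x)))
    (x : X) (hx : ∀ t : ℝ, t ≠ 0 → F (t, x) ≠ x) :
    ∃ χ : Measure X, IsProbabilityMeasure χ ∧
      (∀ s : ℝ, 0 ≤ s →
        ENNReal.ofReal (Real.exp (-s)) • χ ≤ χ.map (fun y => F (s, y))) ∧
      (∀ s : ℝ, 0 < s →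
        tvDist χ (χ.map (fun y => F (s, y))) = ENNReal.ofReal (2 - 2 * Real.exp (-s))) ∧
      Tendsto (fun s : ℝ => tvDist χ (χ.map (fun y => F (s, y)))) atTop (nhds 2) := by
  have hφ : MeasurableEmbedding fun t => F (t, x) :=
    (show Continuous fun t => F (t, x) by fun_prop).measurableEmbedding
      (injective_orbit F h0 hadd hx)
  set χ := expMeasureIic.map fun t => F (t, x)
  have hχ : IsProbabilityMeasure χ := Measure.isProbabilityMeasure_map hφ.measurable.aemeasurable
  have hdecomp (s : ℝ) (hs : 0 ≤ s) : ∃ κ, χ.map (fun y => F (s, y)) =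
      ENNReal.ofReal (exp (-s)) • χ + κ ∧ χ ⟂ₘ κ := by
    obtain ⟨κ, hκ, hsing⟩ := exists_map_add_expMeasureIic_eq_smul_add hs
    refine ⟨κ.map fun t => F (t, x), ?_, hφ.mutuallySingular_map hsing⟩
    rw [map_flow_map_orbit F hF hadd, hκ, Measure.map_add _ _ hφ.measurable, Measure.map_smul]
  have htv (s : ℝ) (hs : 0 < s) :
      tvDist χ (χ.map (fun y => F (s, y))) = ENNReal.ofReal (2 - 2 * exp (-s)) := by
    obtain ⟨κ, hκ, hsing⟩ := hdecomp s hs.le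
    have : IsProbabilityMeasure (χ.map fun y => F (s, y)) :=
      Measure.isProbabilityMeasure_map (show Continuous fun y => F (s, y) by fun_prop).aemeasurable
    rw [tvDist_eq_two_mul_of_eq_smul_add hκ hsing, ENNReal.two_mul_one_sub_ofReal (exp_pos _).le]
  refine ⟨χ, hχ, fun s hs => ?_, htv, ?_⟩
  · obtain ⟨κ, hκ, -⟩ := hdecomp s hs
    exact hκ ▸ Measure.le_add_right le_rfl
  · have hlim : Tendsto (fun s => 2 - 2 * exp (-s)) atTop (nhds 2) := by
      simpa using (tendsto_exp_neg_atTop_nhds_zero.const_mul 2).const_sub 2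
    rw [← ENNReal.ofReal_ofNat 2]
    refine (ENNReal.tendsto_ofReal hlim).congr' ?_
    filter_upwards [eventually_gt_atTop 0] with s hs
    exact (htv s hs).symm

/-- If `x` is an aperiodic point of a continuous flow on a compact Hausdorff space, then
there is a Borel probability measure `χ` such that (i) `(F_s)_*χ ≥ e^{−s}·χ` for all `s ≥ 0`,
and (ii) `‖χ − (F_s)_*χ‖ = 2 − 2e^{−s}` for all `s > 0`; in particular the total variation
distance tends to `2` as `s → ∞`. -/
theorem stmt9 {X : Type*} [TopologicalSpace X] [CompactSpace X] [T2Space X]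
    [MeasurableSpace X] [BorelSpace X]
    (F : ℝ × X → X) (hF : Continuous F)
    (h0 : ∀ x, F (0, x) = x)
    (hadd : ∀ s t x, F (s + t, x) = F (s, F (t, x)))
    (x : X) (hx : ∀ t : ℝ, t ≠ 0 → F (t, x) ≠ x) :
    ∃ χ : Measure X, IsProbabilityMeasure χ ∧
      (∀ s : ℝ, 0 ≤ s →
        ENNReal.ofReal (Real.exp (-s)) • χ ≤ χ.map (fun y => F (s, y))) ∧
      (∀ s : ℝ, 0 < s →
        tvDist χ (χ.map (fun y => F (s, y))) = ENNReal.ofReal (2 - 2 * Real.exp (-s))) ∧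
      Tendsto (fun s : ℝ => tvDist χ (χ.map (fun y => F (s, y)))) atTop (nhds 2) :=
  stmt9_general F hF h0 hadd x hx
end

section
/- Let X be a compact Hausdorff space, let F : ℝ × X → X be a continuous flow, let x ∈ X be an aperiodic point (F(t,x) ≠ x for all t ≠ 0), and let s > 0. Define Borel measures μ₁ and μ₂ on X as the pushforwards of the measures e^t dt on (−∞, 0] and e^{t−s} dt on (0, s], respectively, under the orbit map t ↦ F(t,x). Then μ₁ and μ₂ are mutually singular. -/
open MeasureTheory
open scoped ENNReal

/-- For an aperiodic point `x` of a continuous flow and `s > 0`, the pushforwards of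
`e^t dt` on `(−∞,0]` and of `e^{t−s} dt` on `(0,s]` under the orbit map `t ↦ F(t,x)` are
mutually singular. -/
theorem stmt10 {X : Type*} [TopologicalSpace X] [CompactSpace X] [T2Space X]
    [MeasurableSpace X] [BorelSpace X]
    (F : ℝ × X → X) (hF : Continuous F)
    (h0 : ∀ x, F (0, x) = x)
    (hadd : ∀ s t x, F (s + t, x) = F (s, F (t, x)))
    (x : X) (hx : ∀ t : ℝ, t ≠ 0 → F (t, x) ≠ x)
    (s : ℝ) (hs : 0 < s) :
    Measure.MutuallySingular
      (Measure.map (fun t => F (t, x))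
        ((volume.restrict (Set.Iic (0:ℝ))).withDensity
          fun t => ENNReal.ofReal (Real.exp t)))
      (Measure.map (fun t => F (t, x))
        ((volume.restrict (Set.Ioc (0:ℝ) s)).withDensity
          fun t => ENNReal.ofReal (Real.exp (t - s)))) := by
  set f : ℝ → X := fun t => F (t, x) with hf
  have hfc : Continuous f := hF.comp (continuous_id.prodMk continuous_const)
  have hfm : Measurable f := hfc.measurable
  -- injectivity of the orbit map
  have hinj : Function.Injective f := by
    intro a b hab
    by_contra hne
    apply hx (a - b) (sub_ne_zero.mpr hne)
    have h1 : F (-b, f b) = x := by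
      rw [← hadd, neg_add_cancel, h0]
    have hab' : F (a, x) = f b := hab
    calc F (a - b, x) = F (-b + a, x) := by ring_nf
      _ = F (-b, F (a, x)) := hadd _ _ _
      _ = F (-b, f b) := by rw [hab']
      _ = x := h1
  -- the key compact set
  set K : Set X := f '' Set.Icc 0 s with hK
  have hKc : IsCompact K := isCompact_Icc.image hfc
  have hKm : MeasurableSet K := hKc.isClosed.measurableSet
  refine ⟨K, hKm, ?_, ?_⟩
  · rw [Measure.map_apply hfm hKm]
    apply withDensity_absolutelyContinuous _ _
    rw [Measure.restrict_apply (hfm hKm)]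
    have hsub : f ⁻¹' K ∩ Set.Iic 0 ⊆ {0} := by
      rintro t ⟨⟨u, hu, huv⟩, ht⟩
      have : u = t := hinj huv
      subst this
      exact le_antisymm ht hu.1
    exact measure_mono_null hsub (measure_singleton 0)
  · rw [Measure.map_apply hfm hKm.compl]
    apply withDensity_absolutelyContinuous _ _
    rw [Measure.restrict_apply (hfm hKm.compl)]
    have hsub : f ⁻¹' Kᶜ ∩ Set.Ioc 0 s ⊆ (∅ : Set ℝ) := by
      rintro t ⟨htK, ht⟩
      exact htK ⟨t, ⟨le_of_lt ht.1, ht.2⟩, rfl⟩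
    simpa using measure_mono_null hsub measure_empty
end

section
/- Let V be a normed vector space and let T : ℝ → Isom(V) be a one-parameter group of surjective linear isometries of V, i.e. T(0) = id and T(s+t) = T(s)∘T(t) for all s, t ∈ ℝ. Then for every v ∈ V, every finite families of nonnegative weights p₁,…,p_n and q₁,…,q_m with Σᵢ pᵢ = 1 = Σⱼ qⱼ, and all reals s₁,…,s_n, t₁,…,t_m, one has ‖ Σᵢ pᵢ·T(sᵢ)v − Σⱼ qⱼ·T(tⱼ)v ‖ ≤ sup_{s∈ℝ} ‖T(s)v − v‖. -/
open scoped BigOperators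

/-- For a one-parameter group `T` of surjective linear isometries of a normed space `V`,
any two convex combinations of points on the orbit of `v` are at distance at most
`sup_{s} ‖T s v − v‖` from each other. -/
theorem stmt17 {V : Type*} [NormedAddCommGroup V] [NormedSpace ℝ V]
    (T : ℝ → V → V)
    (hlin : ∀ s, IsLinearMap ℝ (T s))
    (hiso : ∀ s v, ‖T s v‖ = ‖v‖)
    (hsurj : ∀ s, Function.Surjective (T s))
    (h0 : ∀ v, T 0 v = v)
    (hadd : ∀ s t v, T (s + t) v = T s (T t v))
    (v : V) {n m : ℕ} (p : Fin n → ℝ) (q : Fin m → ℝ)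
    (hp : ∀ i, 0 ≤ p i) (hq : ∀ j, 0 ≤ q j)
    (hps : ∑ i, p i = 1) (hqs : ∑ j, q j = 1)
    (s : Fin n → ℝ) (t : Fin m → ℝ) :
    ‖(∑ i, p i • T (s i) v) - ∑ j, q j • T (t j) v‖ ≤ ⨆ r : ℝ, ‖T r v - v‖ := by

  have hbdd : BddAbove (Set.range fun r : ℝ => ‖T r v - v‖) := by
    refine ⟨2 * ‖v‖, ?_⟩
    rintro x ⟨r, rfl⟩
    calc ‖T r v - v‖ ≤ ‖T r v‖ + ‖v‖ := norm_sub_le _ _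
      _ = 2 * ‖v‖ := by rw [hiso]; ring
  have key : ∀ a b : ℝ, ‖T a v - T b v‖ ≤ ⨆ r : ℝ, ‖T r v - v‖ := by
    intro a b
    have h1 : T a v = T b (T (a - b) v) := by
      rw [← hadd]; ring_nf
    have h2 : ‖T a v - T b v‖ = ‖T (a - b) v - v‖ := by
      rw [h1, ← (hlin b).map_sub, hiso]
    rw [h2]
    exact le_ciSup hbdd (a - b)
  have hsum : (∑ i, p i • T (s i) v) - ∑ j, q j • T (t j) v
      = ∑ i, ∑ j, (p i * q j) • (T (s i) v - T (t j) v) := by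
    have : ∀ i, ∑ j, (p i * q j) • (T (s i) v - T (t j) v)
        = p i • T (s i) v - ∑ j, (p i * q j) • T (t j) v := by
      intro i
      simp only [smul_sub]
      rw [Finset.sum_sub_distrib, ← Finset.sum_smul, ← Finset.mul_sum, hqs, mul_one]
    rw [Finset.sum_congr rfl (fun i _ => this i), Finset.sum_sub_distrib]
    congr 1
    rw [Finset.sum_comm]
    refine Finset.sum_congr rfl fun j _ => ?_
    rw [← Finset.sum_smul, ← Finset.sum_mul, hps, one_mul]
  rw [hsum]
  calc ‖∑ i, ∑ j, (p i * q j) • (T (s i) v - T (t j) v)‖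
      ≤ ∑ i, ∑ j, ‖(p i * q j) • (T (s i) v - T (t j) v)‖ := by
        refine (norm_sum_le _ _).trans (Finset.sum_le_sum fun i _ => norm_sum_le _ _)
    _ ≤ ∑ i, ∑ j, (p i * q j) * (⨆ r : ℝ, ‖T r v - v‖) := by
        refine Finset.sum_le_sum fun i _ => Finset.sum_le_sum fun j _ => ?_
        rw [norm_smul, Real.norm_eq_abs, abs_of_nonneg (mul_nonneg (hp i) (hq j))]
        exact mul_le_mul_of_nonneg_left (key _ _) (mul_nonneg (hp i) (hq j))
    _ = ⨆ r : ℝ, ‖T r v - v‖ := by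
        simp only [← Finset.sum_mul, ← Finset.mul_sum, hqs, mul_one, hps, one_mul]
end
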